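/- arXiv:2012.02551 — 4 statements merged into one kernel-verified Lean document; each statement's English description precedes it below -/
import Mathlib

section
/- For every m ≥ 1, the expected total number of orbits (cycles, counting fixed points as cycles of length 1) of a uniformly random permutation of {1,…,m} equals the m-th harmonic number H_m = Σ_{k=1}^m 1/k. -/
/-- The number of orbits (cycles, counting fixed points as cycles of length 1)
of a permutation of `Fin m`. -/
noncomputable def Equiv.Perm.numOrbits {m : ℕ} (σ : Equiv.Perm (Fin m)) : ℕ :=
  Nat.card (MulAction.orbitRel.Quotient (Subgroup.zpowers σ) (Fin m))

/-!
Counting each cycle of length `ℓ` as `ℓ` points of weight `1 / ℓ`, the number of cycles of `σ` is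
`∑ x, 1 / ℓ_σ(x)`, where `ℓ_σ(x)` is the length of the cycle through `x`. Conjugating by a
transposition shows that `ℓ_σ(x)` has the same distribution for every `x`, and for `x = 0` it is
uniform on `{1, …, m}`: writing `σ ↦ (σ 0, e)` as in `Equiv.Perm.decomposeFin`, either `σ 0 = 0`
and `ℓ_σ(0) = 1`, or `σ 0 = j + 1` and the cycle of `0` is `0` followed by the cycle of `j`
under `e`, so `ℓ_σ(0) = ℓ_e(j) + 1`. Hence the expectation is `m · (1 / m) ∑_k 1 / k = H_m`.
-/

open Equiv Finset MulAction
open scoped Nat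

theorem MulAction.sum_inv_card_orbit {G α K : Type*} [Group G] [MulAction G α] [Fintype α]
    [DivisionSemiring K] [CharZero K] :
    ∑ x : α, (Nat.card (orbit G x) : K)⁻¹ = Nat.card (orbitRel.Quotient G α) := by
  classical
  have : Fintype (orbitRel.Quotient G α) := Fintype.ofFinite _
  rw [← (selfEquivSigmaOrbits G α).symm.sum_comp, Fintype.sum_sigma, Nat.card_eq_fintype_card,
    Fintype.card_eq_sum_ones, Nat.cast_sum]
  refine Fintype.sum_congr _ _ fun ω => ?_
  have : Nonempty (orbit G ω.out) := ⟨⟨_, mem_orbit_self _⟩⟩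
  have hcard : (Nat.card (orbit G ω.out) : K) ≠ 0 := Nat.cast_ne_zero.mpr Nat.card_pos.ne'
  calc ∑ y : orbit G ω.out, (Nat.card (orbit G (y : α)) : K)⁻¹
      = ∑ _y : orbit G ω.out, (Nat.card (orbit G ω.out) : K)⁻¹ :=
        Fintype.sum_congr _ _ fun y => by rw [orbit_eq_iff.mpr y.2]
    _ = 1 := by
        rw [sum_const, card_univ, ← Nat.card_eq_fintype_card, nsmul_eq_mul, mul_inv_cancel₀ hcard]
    _ = _ := by simp

namespace Equiv.Perm

variable {α : Type*} {σ : Perm α} {x y : α}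

theorem orbit_zpowers_eq_setOf_sameCycle (σ : Perm α) (x : α) :
    orbit (Subgroup.zpowers σ) x = {y | σ.SameCycle x y} := by
  ext y
  simp only [mem_orbit_iff, Set.mem_ofPred_eq, SameCycle, Subtype.exists, Subgroup.mem_zpowers_iff,
    Subgroup.mk_smul, Perm.smul_def]
  constructor
  · rintro ⟨_, ⟨n, rfl⟩, rfl⟩
    exact ⟨n, rfl⟩
  · rintro ⟨n, rfl⟩
    exact ⟨_, ⟨n, rfl⟩, rfl⟩

theorem SameCycle.mem_of_mapsTo [Finite α] {s : Set α} (hs : Set.MapsTo σ s s) (hx : x ∈ s)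
    (h : σ.SameCycle x y) : y ∈ s := by
  obtain ⟨i, -, rfl⟩ := h.exists_pow_eq'
  exact hs.perm_pow i hx

noncomputable def cycleLength (σ : Perm α) (x : α) : ℕ :=
  {y | σ.SameCycle x y}.ncard

theorem numOrbits_eq_sum_inv_cycleLength {m : ℕ} {K : Type*} [DivisionSemiring K] [CharZero K]
    (σ : Perm (Fin m)) : (σ.numOrbits : K) = ∑ x, (σ.cycleLength x : K)⁻¹ := by
  simp only [numOrbits, cycleLength, ← orbit_zpowers_eq_setOf_sameCycle, Nat.card_coe_set_eq,
    ← sum_inv_card_orbit]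

theorem cycleLength_conj (σ τ : Perm α) (x : α) :
    (τ * σ * τ⁻¹).cycleLength (τ x) = σ.cycleLength x := by
  have : {y | (τ * σ * τ⁻¹).SameCycle (τ x) y} = τ '' {y | σ.SameCycle x y} := by
    ext y
    simp [sameCycle_conj, Set.mem_image_equiv]
  rw [cycleLength, this, Set.ncard_image_of_injective _ τ.injective, cycleLength]

theorem sum_comp_cycleLength_eq [Fintype α] [DecidableEq α] {M : Type*} [AddCommMonoid M]
    (f : ℕ → M) (x y : α) :
    ∑ σ : Perm α, f (σ.cycleLength x) = ∑ σ : Perm α, f (σ.cycleLength y) := by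
  refine Fintype.sum_equiv (MulAut.conj (swap x y)).toEquiv _ _ fun σ => ?_
  simp [← cycleLength_conj σ (swap x y) x]

theorem cycleLength_eq_one (h : σ x = x) : σ.cycleLength x = 1 := by
  have : {y | σ.SameCycle x y} = {x} :=
    Set.ext fun y => ⟨fun hy => (hy.eq_of_left h).symm, fun hy => hy ▸ SameCycle.refl σ x⟩
  rw [cycleLength, this, Set.ncard_singleton]

theorem setOf_sameCycle_decomposeFin_symm_succ {n : ℕ} (e : Perm (Fin n)) (j : Fin n) :
    {y | (decomposeFin.symm (j.succ, e)).SameCycle 0 y} =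
      insert 0 (Fin.succ '' {z | e.SameCycle j z}) := by
  set σ := decomposeFin.symm (j.succ, e)
  have hσ_succ (z : Fin n) : σ z.succ = if e z = j then 0 else (e z).succ := by
    split_ifs with h
    · simp [σ, h]
    · simp [σ, swap_apply_of_ne_of_ne, h]
  have hσ_zero : σ.SameCycle 0 j.succ := by
    rw [← decomposeFin_symm_apply_zero j.succ e]
    exact sameCycle_apply_right.mpr (.refl _ _)
  -- The right side is `σ`-invariant and contains `0`; conversely, the `z` with `z.succ` in the
  -- cycle of `0` form an `e`-invariant set containing `j`.
  ext y
  constructor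
  · refine SameCycle.mem_of_mapsTo ?_ (Set.mem_insert 0 _)
    rintro _ (rfl | ⟨z, hz, rfl⟩)
    · exact Set.mem_insert_of_mem 0 ⟨j, .refl e j, by simp [σ]⟩
    · rw [hσ_succ]
      split_ifs
      · exact Set.mem_insert 0 _
      · exact Set.mem_insert_of_mem 0 ⟨e z, sameCycle_apply_right.mpr hz, rfl⟩
  · rintro (rfl | ⟨z, hz, rfl⟩)
    · exact SameCycle.refl σ 0
    · refine SameCycle.mem_of_mapsTo (s := {z | σ.SameCycle 0 z.succ}) ?_ ?_ hz
      · intro z hz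
        by_cases h : e z = j
        · simpa [h] using hσ_zero
        · simpa [hσ_succ, h] using sameCycle_apply_right.mpr hz
      · exact hσ_zero

theorem cycleLength_decomposeFin_symm_succ {n : ℕ} (e : Perm (Fin n)) (j : Fin n) :
    (decomposeFin.symm (j.succ, e)).cycleLength 0 = e.cycleLength j + 1 := by
  rw [cycleLength, setOf_sameCycle_decomposeFin_symm_succ,
    Set.ncard_insert_of_notMem (by simp [Fin.succ_ne_zero]) (Set.toFinite _),
    Set.ncard_image_of_injective _ (Fin.succ_injective n), cycleLength]

theorem sum_comp_cycleLength_zero {M : Type*} [AddCommMonoid M] (n : ℕ) (f : ℕ → M) :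
    ∑ σ : Perm (Fin (n + 1)), f (σ.cycleLength 0) = n ! • ∑ k ∈ range (n + 1), f (k + 1) := by
  induction n generalizing f with
  | zero => simp [cycleLength_eq_one (Subsingleton.elim _ _)]
  | succ n ih =>
    calc ∑ σ : Perm (Fin (n + 2)), f (σ.cycleLength 0)
        = ∑ _e : Perm (Fin (n + 1)), f 1 +
            ∑ j : Fin (n + 1), ∑ e : Perm (Fin (n + 1)), f (e.cycleLength j + 1) := by
          rw [← decomposeFin.symm.sum_comp, Fintype.sum_prod_type, Fin.sum_univ_succ]
          simp only [cycleLength_eq_one (decomposeFin_symm_apply_zero _ _),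
            cycleLength_decomposeFin_symm_succ]
      _ = (n + 1)! • f 1 + (n + 1) • ∑ e : Perm (Fin (n + 1)), f (e.cycleLength 0 + 1) := by
          simp [sum_comp_cycleLength_eq (fun k => f (k + 1)) _ (0 : Fin (n + 1)), Fintype.card_perm]
      _ = (n + 1)! • ∑ k ∈ range (n + 2), f (k + 1) := by
          rw [ih fun k => f (k + 1), sum_range_succ' _ (n + 1), smul_add, smul_smul,
            Nat.factorial_succ, add_comm]

theorem sum_numOrbits_eq_factorial_mul_harmonic (m : ℕ) : ∑ σ : Perm (Fin m), (σ.numOrbits : ℚ) = m ! * harmonic m := by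
  simp only [numOrbits_eq_sum_inv_cycleLength (K := ℚ)]
  rw [sum_comm]
  cases m with
  | zero => simp
  | succ n =>
    simp only [sum_comp_cycleLength_eq (fun k => (k : ℚ)⁻¹) _ (0 : Fin (n + 1)),
      sum_comp_cycleLength_zero n fun k => (k : ℚ)⁻¹]
    simp [harmonic, Nat.factorial_succ, mul_assoc]

end Equiv.Perm

theorem expected_number_of_cycles_general (m : ℕ) :
    (∑ σ : Equiv.Perm (Fin m), (Equiv.Perm.numOrbits σ : ℝ)) / (Nat.factorial m : ℝ) =
      ∑ k ∈ Finset.Icc 1 m, (1 : ℝ) / k := by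
  have h : ∑ σ : Perm (Fin m), (σ.numOrbits : ℝ) = m ! * (harmonic m : ℝ) := by
    exact_mod_cast congrArg (Rat.cast : ℚ → ℝ) (Perm.sum_numOrbits_eq_factorial_mul_harmonic m)
  rw [h, mul_div_cancel_left₀ _ (by positivity), harmonic_eq_sum_Icc]
  simp

/-- For every `m ≥ 1`, the expected number of orbits of a uniformly random
permutation of `{1,…,m}` equals the `m`-th harmonic number `∑_{k=1}^m 1/k`. -/
theorem expected_number_of_cycles (m : ℕ) (hm : 1 ≤ m) :
    (∑ σ : Equiv.Perm (Fin m), (Equiv.Perm.numOrbits σ : ℝ)) / (Nat.factorial m : ℝ) =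
      ∑ k ∈ Finset.Icc 1 m, (1 : ℝ) / k :=
  expected_number_of_cycles_general m
end

section
/- Neighborhood Lemma (random-sample form). Let n be even, let A and B be disjoint sets each of size n/2, and let (s_{a,t})_{a∈A, 1≤t≤⌈log n⌉} be mutually independent random variables, each uniformly distributed on B. For a nonempty A' ⊆ A write d(A') = min(√(n/|A'|), log n) and N(A') = { s_{a,t} : a ∈ A', 1 ≤ t ≤ ⌈d(A')⌉ }. Then there exist a constant c > 0 and N₀ such that for all n ≥ N₀, with probability at least 1 − c·n^{−2}, every nonempty subset A' ⊆ A satisfies |N(A')| ≥ (1/100)·|A'|·d(A'). -/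
/-!
If the event fails, some `A'` with `|A'| = i` has all of its `k = i⌈d⌉ ≥ i d` relevant samples
inside a set `S` of size `m = ⌊i d / 100⌋`. A union bound over `A'` and `S` bounds the
probability of this by `C(N, i) C(N, m) (m / N)^k` with `N = n / 2`. Since
`C(N, j) (j / N)^j ≤ e^j`, the logarithm of this bound is at most
`i (1 + L) + m - (k - m) (L / 2 + log 50)` where `L = log (n / i)`, and this is `≤ -3 log n` both
when `d = log n` and when `d = √(n / i)` (then `d ≥ 1 + L / 2` and `i ≥ n / log² n ≥ 2 log n`).
Summing over `i ≤ n / 2` bounds the failure probability by `1 / (2 n²)`.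
-/

/-- `d(i) = min(√(n/i), log n)`. -/
noncomputable def dFun (n i : ℕ) : ℝ :=
  min (Real.sqrt ((n : ℝ) / (i : ℝ))) (Real.log n)

/-- Given an i.i.d.-uniform sample table `s : A × Fin ⌈log n⌉ → B`
(with `A = B = Fin (n/2)` as index sets of two disjoint sets of size `n/2`),
the event that every nonempty `A' ⊆ A` has
`|N(A')| ≥ (1/100)·|A'|·d(A')`, where `N(A')` consists of the values of the
first `⌈d(A')⌉` samples of each element of `A'`. -/
def GoodSample (n : ℕ) (s : Fin (n / 2) × Fin ⌈Real.log n⌉₊ → Fin (n / 2)) : Prop :=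
  ∀ A' : Finset (Fin (n / 2)), A'.Nonempty →
    (1 : ℝ) / 100 * A'.card * dFun n A'.card ≤
      ((A' ×ˢ (Finset.univ.filter fun t : Fin ⌈Real.log n⌉₊ =>
          (t : ℕ) < ⌈dFun n A'.card⌉₊)).image s).card

open Finset Real Filter

theorem card_forall_mem_eq {α β : Type*} [Fintype α] [Fintype β] [Nonempty β]
    (D : Finset α) (S : Finset β) :
    (Nat.card {f : α → β // ∀ x ∈ D, f x ∈ S} : ℝ) =
      Fintype.card β ^ Fintype.card α * (#S / Fintype.card β : ℝ) ^ #D := by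
  classical
  have hβ : (Fintype.card β : ℝ) ≠ 0 := by positivity
  have hpi : Nat.card {f : α → β // ∀ x ∈ D, f x ∈ S} =
      #(Fintype.piFinset fun x => if x ∈ D then S else univ) := by
    rw [Nat.card_eq_fintype_card, Fintype.card_subtype]
    congr 1
    ext f
    simp only [mem_filter, mem_univ, true_and, Fintype.mem_piFinset]
    exact ⟨fun h x => by split_ifs with hx <;> simp [h x, hx],
      fun h x hx => by simpa [hx] using h x⟩
  rw [hpi, Fintype.card_piFinset, Nat.cast_prod]
  calc ∏ x, ((#(if x ∈ D then S else univ) : ℕ) : ℝ)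
      = ∏ x, ((Fintype.card β : ℝ) * if x ∈ D then (#S : ℝ) / Fintype.card β else 1) := by
        refine prod_congr rfl fun x _ => ?_
        split_ifs <;> simp [mul_div_cancel₀, hβ]
    _ = _ := by
        rw [prod_mul_distrib, prod_const, prod_ite_mem, univ_inter, prod_const, card_univ]

/-- The union bound over the size `i` of `A`, the set `A`, and a set `S ⊇ s '' D A` of size
`m i`. -/
theorem card_exists_card_image_le {ι α β : Type*} [Fintype ι] [Fintype α] [Fintype β]
    [DecidableEq β] [Nonempty β] (D : Finset ι → Finset α) (k m : ℕ → ℕ)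
    (hD : ∀ A, #(D A) = k #A) (hm : ∀ i ≤ Fintype.card ι, m i ≤ Fintype.card β) :
    (Nat.card {s : α → β // ∃ A : Finset ι, A.Nonempty ∧ #((D A).image s) ≤ m #A} : ℝ) ≤
      Fintype.card β ^ Fintype.card α * ∑ i ∈ Icc 1 (Fintype.card ι),
        (Fintype.card ι).choose i * (Fintype.card β).choose (m i) *
          (m i / Fintype.card β : ℝ) ^ k i := by
  classical
  set J := (Icc 1 (Fintype.card ι)).sigma fun i =>
    powersetCard i (univ : Finset ι) ×ˢ powersetCard (m i) (univ : Finset β)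
  have hcover : ∀ s : α → β, (∃ A : Finset ι, A.Nonempty ∧ #((D A).image s) ≤ m #A) →
      ∃ j ∈ J, ∀ x ∈ D j.2.1, s x ∈ j.2.2 := by
    rintro s ⟨A, hA, hcard⟩
    obtain ⟨S, hsS, -, hS⟩ := exists_subsuperset_card_eq (subset_univ ((D A).image s)) hcard
      (by simpa using hm _ (card_le_univ A))
    refine ⟨⟨#A, A, S⟩, ?_, fun x hx => hsS (mem_image_of_mem s hx)⟩
    simp [J, mem_sigma, hS, one_le_card.2 hA, card_le_univ]
  calc (Nat.card {s : α → β // ∃ A : Finset ι, A.Nonempty ∧ #((D A).image s) ≤ m #A} : ℝ)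
      ≤ ∑ j ∈ J, (Nat.card {s : α → β // ∀ x ∈ D j.2.1, s x ∈ j.2.2} : ℝ) := by
        simp only [Nat.card_eq_fintype_card, Fintype.card_subtype]
        refine mod_cast (card_le_card fun s hs => ?_).trans card_biUnion_le
        obtain ⟨j, hj, hs⟩ := hcover s (mem_filter.1 hs).2
        exact mem_biUnion.2 ⟨j, hj, mem_filter.2 ⟨mem_univ s, hs⟩⟩
    _ = _ := by
        rw [sum_sigma, mul_sum]
        refine sum_congr rfl fun i hi => ?_
        have hterm :
            ∀ j ∈ powersetCard i (univ : Finset ι) ×ˢ powersetCard (m i) (univ : Finset β),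
            (Nat.card {s : α → β // ∀ x ∈ D j.1, s x ∈ j.2} : ℝ) =
              Fintype.card β ^ Fintype.card α * (m i / Fintype.card β : ℝ) ^ k i := by
          intro j hj
          obtain ⟨hA, hS⟩ := mem_product.1 hj
          rw [card_forall_mem_eq, hD, (mem_powersetCard.1 hA).2, (mem_powersetCard.1 hS).2]
        rw [sum_congr rfl hterm, sum_const, card_product, card_powersetCard, card_powersetCard,
          card_univ, card_univ, nsmul_eq_mul]
        push_cast
        ring

theorem one_sub_le_card_div_of_card_not_le {α : Type*} [Fintype α] [Nonempty α] (p : α → Prop)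
    {ε : ℝ} (h : (Nat.card {x // ¬ p x} : ℝ) ≤ ε * Fintype.card α) :
    1 - ε ≤ Nat.card {x // p x} / Fintype.card α := by
  classical
  have hsum : (Nat.card {x // p x} : ℝ) + Nat.card {x // ¬ p x} = Fintype.card α := by
    simp only [Nat.card_eq_fintype_card, Fintype.card_subtype]
    exact_mod_cast card_filter_add_card_filter_not p
  rw [le_div_iff₀ (by positivity)]
  linarith

theorem Nat.choose_mul_div_pow_le_exp (N m : ℕ) :
    (N.choose m : ℝ) * ((m : ℝ) / N) ^ m ≤ exp m := by
  have hNm : (N : ℝ) * (m / N) ≤ m := by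
    rcases eq_or_ne (N : ℝ) 0 with hN | hN
    · simp [hN]
    · rw [mul_div_cancel₀ _ hN]
  calc (N.choose m : ℝ) * ((m : ℝ) / N) ^ m
      ≤ (N : ℝ) ^ m / m.factorial * ((m : ℝ) / N) ^ m := by
        gcongr
        exact Nat.choose_le_pow_div m N
    _ = ((N : ℝ) * (m / N)) ^ m / m.factorial := by ring
    _ ≤ (m : ℝ) ^ m / m.factorial := by gcongr
    _ ≤ exp m := pow_div_factorial_le_exp _ m.cast_nonneg m

theorem choose_mul_choose_mul_div_pow_le_exp {N i m k : ℕ} (hN : 0 < N) (hi : 0 < i)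
    (hm : 0 < m) (hmk : m ≤ k) :
    (N.choose i : ℝ) * N.choose m * ((m : ℝ) / N) ^ k ≤
      exp (i * (1 + log (N / i)) + m + (k - m) * log (m / N)) := by
  have hpow : ∀ (x : ℝ) (j : ℕ), 0 < x → x ^ j = exp (j * log x) := fun x j hx => by
    rw [← log_pow, exp_log (by positivity)]
  have hchoose_i : (N.choose i : ℝ) ≤ exp i * ((N : ℝ) / i) ^ i := by
    have := N.choose_mul_div_pow_le_exp i
    rwa [← le_div_iff₀ (by positivity), div_eq_mul_inv, ← inv_pow, inv_div] at this
  calc (N.choose i : ℝ) * N.choose m * ((m : ℝ) / N) ^ k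
      = N.choose i * (N.choose m * ((m : ℝ) / N) ^ m) * ((m : ℝ) / N) ^ (k - m) := by
        conv_lhs => rw [← Nat.add_sub_cancel' hmk, pow_add]
        ring
    _ ≤ exp i * ((N : ℝ) / i) ^ i * exp m * ((m : ℝ) / N) ^ (k - m) := by
        gcongr
        exact N.choose_mul_div_pow_le_exp m
    _ = exp (i * (1 + log (N / i)) + m + (k - m) * log (m / N)) := by
        rw [hpow _ i (by positivity), hpow _ (k - m) (by positivity), Nat.cast_sub hmk,
          ← exp_add, ← exp_add, ← exp_add]
        ring_nf

theorem seven_halves_le_log_fifty : 7 / 2 ≤ log 50 := by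
  have h : exp 7 ≤ 50 ^ 2 := by
    calc exp 7 = exp 1 ^ 7 := by rw [← exp_nat_mul]; norm_num
      _ ≤ 2.7182818286 ^ 7 := by gcongr; exact exp_one_lt_d9.le
      _ ≤ 50 ^ 2 := by norm_num
  have := log_le_log (exp_pos 7) h
  rw [log_exp, log_pow] at this
  push_cast at this
  linarith

/- The exponent in the two regimes `d = log n ≥ 3` and `d = √(n / i) = exp (L / 2)`,
where `L = log (n / i)`. -/
theorem exponent_le_of_three_le {L c d : ℝ} (hL : 0 ≤ L) (hc : 7 / 2 ≤ c) (hd : 3 ≤ d) :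
    1 + L + d / 100 - 99 / 100 * d * (L / 2 + c) ≤ -3 * d := by
  nlinarith [mul_nonneg hL (by linarith : (0 : ℝ) ≤ d - 3)]

theorem exponent_le_of_one_add_half_le {L c d : ℝ} (hL : 0 ≤ L) (hc : 7 / 2 ≤ c)
    (hd : 1 + L / 2 ≤ d) :
    1 + L + d / 100 - 99 / 100 * d * (L / 2 + c) ≤ -3 / 2 := by
  nlinarith [mul_nonneg hL (by linarith : (0 : ℝ) ≤ d - 1 - L / 2)]

theorem dFun_nonneg (n i : ℕ) : 0 ≤ dFun n i :=
  le_min (sqrt_nonneg _) (log_natCast_nonneg n)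

theorem sq_mul_dFun_le (n i : ℕ) : ((i : ℝ) * dFun n i) ^ 2 ≤ i * n := by
  rcases i.eq_zero_or_pos with rfl | hi
  · simp
  have hd : dFun n i ^ 2 ≤ n / i :=
    (le_sqrt (dFun_nonneg n i) (by positivity)).1 (min_le_left _ _)
  have hi' : (0 : ℝ) < i := by exact_mod_cast hi
  calc ((i : ℝ) * dFun n i) ^ 2 = (i : ℝ) ^ 2 * dFun n i ^ 2 := by ring
    _ ≤ (i : ℝ) ^ 2 * (n / i) := by gcongr
    _ = (i : ℝ) * n := by field_simp

theorem mul_dFun_le {n i : ℕ} (hi : i ≤ n) : i * dFun n i ≤ n := by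
  have : ((i : ℝ) * dFun n i) ^ 2 ≤ (n : ℝ) ^ 2 :=
    (sq_mul_dFun_le n i).trans (by rw [sq]; gcongr)
  exact (pow_le_pow_iff_left₀ (by have := dFun_nonneg n i; positivity) n.cast_nonneg
    two_ne_zero).1 this

theorem log_div_le_of_le_mul_dFun {n N i m : ℕ} (hnN : (n : ℝ) = 2 * N) (hN : 0 < N)
    (hi : 0 < i) (hm0 : 0 < m) (hm : (m : ℝ) ≤ i * dFun n i / 100) :
    log (m / N) ≤ -((log n - log i) / 2 + log 50) := by
  have hN' : (0 : ℝ) < N := by exact_mod_cast hN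
  have hn : (0 : ℝ) < n := by linarith
  have hi' : (0 : ℝ) < i := by exact_mod_cast hi
  have hid : 0 < (i : ℝ) * dFun n i := by
    have : (0 : ℝ) < m := by exact_mod_cast hm0
    linarith
  have hmN : (m : ℝ) / N ≤ i * dFun n i / (50 * n) := by
    rw [div_le_div_iff₀ hN' (by positivity)]
    nlinarith
  have hsq := log_le_log (by positivity) (sq_mul_dFun_le n i)
  rw [log_pow, log_mul hi'.ne' hn.ne'] at hsq
  push_cast at hsq
  have hrhs : log (i * dFun n i / (50 * n)) = log (i * dFun n i) - log 50 - log n := by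
    rw [log_div hid.ne' (by positivity), log_mul (by norm_num) hn.ne']
    ring
  have := log_le_log (by positivity) hmN
  linarith

theorem mul_exponent_le_neg_three_mul_log {n i : ℕ} (hlog : 3 ≤ log n)
    (hcube : 2 * log n ^ 3 ≤ n) (hi : 0 < i) (hin : (i : ℝ) ≤ n) :
    i * (1 + (log n - log i) + dFun n i / 100 -
      99 / 100 * dFun n i * ((log n - log i) / 2 + log 50)) ≤ -3 * log n := by
  set d := dFun n i
  set L := log n - log i
  have hn : (0 : ℝ) < n := by nlinarith [pow_pos (by linarith : 0 < log n) 3]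
  have hi' : (0 : ℝ) < i := by exact_mod_cast hi
  have hL : 0 ≤ L := by linarith [log_le_log hi' hin]
  have hc := seven_halves_le_log_fifty
  rcases min_choice (sqrt ((n : ℝ) / i)) (log n) with hd_sqrt | hd_log
  · have hd_sqrt : d = sqrt (n / i) := hd_sqrt
    have hhalf : 1 + L / 2 ≤ d := by
      have hd : 0 < d := by rw [hd_sqrt]; positivity
      have hlogd : log d = L / 2 := by
        rw [hd_sqrt, log_sqrt (by positivity), log_div hn.ne' hi'.ne']
      linarith [add_one_le_exp (log d), exp_log hd]
    have hi_large : 2 * log n ≤ i := by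
      have hsq : (n : ℝ) / i ≤ log n ^ 2 := by
        rw [← sq_sqrt (by positivity : (0 : ℝ) ≤ n / i), ← hd_sqrt]
        exact pow_le_pow_left₀ (dFun_nonneg n i) (min_le_right _ _) 2
      rw [div_le_iff₀ hi'] at hsq
      nlinarith [pow_pos (by linarith : 0 < log n) 2]
    nlinarith [exponent_le_of_one_add_half_le hL hc hhalf]
  · have hd_log : d = log n := hd_log
    have hB := exponent_le_of_three_le hL hc (hd_log ▸ hlog)
    have hi1 : (1 : ℝ) ≤ i := by exact_mod_cast hi
    rw [← hd_log]
    nlinarith [mul_le_mul_of_nonpos_right hi1 (hB.trans (by linarith))]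

theorem choose_mul_choose_mul_div_pow_le_one_div_pow_three {n N i m k : ℕ}
    (hnN : (n : ℝ) = 2 * N) (hlog : 3 ≤ log n) (hcube : 2 * log n ^ 3 ≤ n) (hi : 0 < i)
    (hiN : i ≤ N) (hm : (m : ℝ) ≤ i * dFun n i / 100) (hk : i * dFun n i ≤ k) :
    (N.choose i : ℝ) * N.choose m * ((m : ℝ) / N) ^ k ≤ 1 / n ^ 3 := by
  have hN : 0 < N := hi.trans_le hiN
  have hn : (0 : ℝ) < n := by rw [hnN]; positivity
  have hi' : (0 : ℝ) < i := by exact_mod_cast hi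
  have hin : (i : ℝ) ≤ n := by
    have : (i : ℝ) ≤ N := by exact_mod_cast hiN
    linarith
  have hd : 0 < dFun n i := lt_min (sqrt_pos.2 (by positivity)) (by linarith)
  rcases m.eq_zero_or_pos with rfl | hm0
  · have hk0 : k ≠ 0 := by
      rintro rfl
      push_cast at hk
      nlinarith
    simp [zero_pow hk0]
  have hmk : m ≤ k := by
    have : (m : ℝ) ≤ k := by nlinarith
    exact_mod_cast this
  refine (choose_mul_choose_mul_div_pow_le_exp hN hi hm0 hmk).trans ?_
  have hexp : exp (-3 * log n) = 1 / n ^ 3 := by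
    rw [neg_mul, exp_neg, mul_comm, exp_mul, exp_log hn, one_div]
    norm_cast
  rw [← hexp, exp_le_exp]
  have hlogNi : log (N / i) ≤ log n - log i := by
    rw [log_div (by positivity) hi'.ne']
    linarith [log_le_log (by positivity) (by linarith : (N : ℝ) ≤ n)]
  have hlogmN := log_div_le_of_le_mul_dFun hnN hN hi hm0 hm
  have hkm : 99 / 100 * (i * dFun n i) ≤ k - m := by linarith
  nlinarith [mul_exponent_le_neg_three_mul_log hlog hcube hi hin,
    mul_le_mul_of_nonneg_left hlogNi hi'.le,
    mul_le_mul_of_nonneg_left hlogmN (by linarith : (0 : ℝ) ≤ k - m),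
    mul_le_mul_of_nonneg_right hkm (by linarith [seven_halves_le_log_fifty, log_le_log hi' hin] :
      0 ≤ (log n - log i) / 2 + log 50)]

theorem eventually_log_bounds :
    ∀ᶠ n : ℕ in atTop, 2 ≤ n ∧ 3 ≤ log n ∧ 2 * log n ^ 3 ≤ n := by
  have hlog := (tendsto_log_atTop.comp tendsto_natCast_atTop_atTop).eventually_ge_atTop 3
  have hratio := ((tendsto_pow_log_div_mul_add_atTop 1 0 3 one_ne_zero).comp
    tendsto_natCast_atTop_atTop).eventually (ge_mem_nhds (by norm_num : (0 : ℝ) < 1 / 2))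
  filter_upwards [eventually_ge_atTop 2, hlog, hratio] with n hn hlog hratio
  refine ⟨hn, hlog, ?_⟩
  have hn' : (0 : ℝ) < n := by positivity
  simp only [Function.comp, one_mul, add_zero] at hratio
  rw [div_le_iff₀ hn'] at hratio
  linarith

theorem sum_choose_mul_choose_mul_div_pow_le {n N : ℕ} (hnN : (n : ℝ) = 2 * N)
    (hlog : 3 ≤ log n) (hcube : 2 * log n ^ 3 ≤ n) :
    ∑ i ∈ Icc 1 N, (N.choose i : ℝ) * N.choose ⌊(i : ℝ) * dFun n i / 100⌋₊ *
        ((⌊(i : ℝ) * dFun n i / 100⌋₊ : ℝ) / N) ^ (i * ⌈dFun n i⌉₊) ≤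
      1 / n ^ 2 := by
  refine (sum_le_sum (g := fun _ => 1 / (n : ℝ) ^ 3) fun i hi => ?_).trans ?_
  · obtain ⟨hi1, hiN⟩ := mem_Icc.1 hi
    refine choose_mul_choose_mul_div_pow_le_one_div_pow_three hnN hlog hcube hi1 hiN
      (Nat.floor_le (by have := dFun_nonneg n i; positivity)) ?_
    push_cast
    exact mul_le_mul_of_nonneg_left (Nat.le_ceil _) i.cast_nonneg
  · have hn : (0 : ℝ) < n := by nlinarith [pow_pos (by linarith : 0 < log n) 3]
    rw [sum_const, Nat.card_Icc, Nat.add_sub_cancel, nsmul_eq_mul,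
      show (N : ℝ) = n / 2 by linarith]
    field_simp
    linarith

/-- The positions `(a, t)` of the samples whose values make up `N(A)`. -/
noncomputable def sampleWindow (n : ℕ) (A : Finset (Fin (n / 2))) :
    Finset (Fin (n / 2) × Fin ⌈log n⌉₊) :=
  A ×ˢ univ.filter fun t : Fin ⌈log n⌉₊ => (t : ℕ) < ⌈dFun n #A⌉₊

theorem card_sampleWindow (n : ℕ) (A : Finset (Fin (n / 2))) :
    #(sampleWindow n A) = #A * ⌈dFun n #A⌉₊ := by
  have hceil : ⌈dFun n #A⌉₊ ≤ ⌈log n⌉₊ := Nat.ceil_mono (min_le_right _ _)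
  rw [sampleWindow, card_product, Fin.card_filter_val_lt, min_eq_right hceil]

theorem exists_card_image_le_of_not_goodSample {n : ℕ}
    {s : Fin (n / 2) × Fin ⌈log n⌉₊ → Fin (n / 2)} (h : ¬ GoodSample n s) :
    ∃ A : Finset (Fin (n / 2)), A.Nonempty ∧
      #((sampleWindow n A).image s) ≤ ⌊(#A : ℝ) * dFun n #A / 100⌋₊ := by
  simp only [GoodSample, not_forall, not_le] at h
  obtain ⟨A, hA, hlt⟩ := h
  refine ⟨A, hA, Nat.le_floor ?_⟩
  unfold sampleWindow
  linarith

theorem card_not_goodSample_le {n : ℕ} (heven : Even n) (hn : 2 ≤ n) (hlog : 3 ≤ log n)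
    (hcube : 2 * log n ^ 3 ≤ n) :
    (Nat.card {s : Fin (n / 2) × Fin ⌈log n⌉₊ → Fin (n / 2) // ¬ GoodSample n s} : ℝ) ≤
      1 / n ^ 2 * Fintype.card (Fin (n / 2) × Fin ⌈log n⌉₊ → Fin (n / 2)) := by
  have hnN : (n : ℝ) = 2 * (n / 2 : ℕ) := by
    exact_mod_cast (Nat.two_mul_div_two_of_even heven).symm
  have : Nonempty (Fin (n / 2)) := ⟨⟨0, by omega⟩⟩
  have hm : ∀ i ≤ Fintype.card (Fin (n / 2)),
      ⌊(i : ℝ) * dFun n i / 100⌋₊ ≤ Fintype.card (Fin (n / 2)) := by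
    intro i hi
    rw [Fintype.card_fin] at hi ⊢
    refine Nat.floor_le_of_le ?_
    have := mul_dFun_le (hi.trans (Nat.div_le_self n 2))
    linarith
  calc (Nat.card {s : Fin (n / 2) × Fin ⌈log n⌉₊ → Fin (n / 2) // ¬ GoodSample n s} : ℝ)
      ≤ Nat.card {s : Fin (n / 2) × Fin ⌈log n⌉₊ → Fin (n / 2) // ∃ A : Finset (Fin (n / 2)),
          A.Nonempty ∧ #((sampleWindow n A).image s) ≤ ⌊(#A : ℝ) * dFun n #A / 100⌋₊} :=
        mod_cast Finite.card_le_of_embedding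
          (Subtype.impEmbedding _ _ fun _ => exists_card_image_le_of_not_goodSample)
    _ ≤ _ := card_exists_card_image_le _ (fun i => i * ⌈dFun n i⌉₊)
          (fun i => ⌊(i : ℝ) * dFun n i / 100⌋₊) (card_sampleWindow n) hm
    _ ≤ _ := by
        rw [Fintype.card_fun, mul_comm (1 / _ : ℝ)]
        simp only [Fintype.card_fin]
        push_cast
        exact mul_le_mul_of_nonneg_left (sum_choose_mul_choose_mul_div_pow_le hnN hlog hcube)
          (by positivity)

/-- Neighborhood lemma, random-sample form: there are `c > 0` and `N₀` such that
for all even `n ≥ N₀`, a uniformly random sample table (equivalently, mutually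
independent uniform samples `s_{a,t} ∈ B`) satisfies the expansion event
`GoodSample` with probability at least `1 - c·n⁻²`. -/
theorem neighborhood_lemma_random_samples :
    ∃ c : ℝ, 0 < c ∧ ∃ N₀ : ℕ, ∀ n : ℕ, N₀ ≤ n → Even n →
      1 - c / (n : ℝ) ^ 2 ≤
        (Nat.card {s : Fin (n / 2) × Fin ⌈Real.log n⌉₊ → Fin (n / 2) // GoodSample n s} : ℝ) /
          (Fintype.card (Fin (n / 2) × Fin ⌈Real.log n⌉₊ → Fin (n / 2)) : ℝ) := by
  obtain ⟨N₀, hN₀⟩ := eventually_atTop.1 eventually_log_bounds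
  refine ⟨1, one_pos, N₀, fun n hn heven => ?_⟩
  obtain ⟨hn2, hlog, hcube⟩ := hN₀ n hn
  have : Nonempty (Fin (n / 2)) := ⟨⟨0, by omega⟩⟩
  exact one_sub_le_card_div_of_card_not_le _ (card_not_goodSample_le heven hn2 hlog hcube)
end

section
/- There exists N₀ such that for all integers n ≥ N₀ and all integers 1 ≤ i ≤ n, (1/4)·log( 100n / (i·d(i)) ) ≥ log( e·n/i ) / d(i), where d(i) = min(√(n/i), log n) and e is Euler's number. -/
open Real

lemma exp_nine_lt : exp 9 < 10000 :=
  calc exp 9 = exp 1 ^ 9 := by rw [exp_one_pow]; norm_num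
    _ < 2.7182818286 ^ 9 := by gcongr; exact exp_one_lt_d9
    _ < 10000 := by norm_num

lemma nine_div_two_le_log_hundred : (9 / 2 : ℝ) ≤ log 100 := by
  have h : exp (9 / 2) ^ 2 = exp 9 := by rw [← exp_nat_mul]; norm_num
  rw [le_log_iff_exp_le (by norm_num)]
  nlinarith [exp_pos (9 / 2), exp_nine_lt]

lemma eight_le_log {x : ℝ} (hx : 10000 ≤ x) : 8 ≤ log x := by
  rw [le_log_iff_exp_le (by linarith)]
  linarith [exp_lt_exp.2 (by norm_num : (8 : ℝ) < 9), exp_nine_lt]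

lemma one_add_two_mul_div_exp_le {s : ℝ} (hs : 0 ≤ s) :
    (1 + 2 * s) / exp s ≤ (9 / 2 + s) / 4 := by
  rw [div_le_div_iff₀ (exp_pos s) (by norm_num)]
  -- `13/4 s² - 5/2 s + 1/2` has negative discriminant
  nlinarith [quadratic_le_exp_of_nonneg hs, sq_nonneg (s - 5 / 13), pow_nonneg hs 3]

lemma one_add_log_div_sqrt_le {x : ℝ} (hx : 1 ≤ x) :
    (1 + log x) / √x ≤ 1 / 4 * log (100 * x / √x) := by
  have hsx : 0 < √x := sqrt_pos.2 (by linarith)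
  have hs : 0 ≤ log √x := log_nonneg (one_le_sqrt.2 hx)
  have hlog : log x = 2 * log √x := by rw [log_sqrt (by linarith)]; ring
  have harg : 100 * x / √x = 100 * √x := by
    rw [div_eq_iff hsx.ne', mul_assoc, mul_self_sqrt (by linarith)]
  have key := one_add_two_mul_div_exp_le hs
  rw [exp_log hsx] at key
  rw [hlog, harg, log_mul (by norm_num) hsx.ne']
  linarith [nine_div_two_le_log_hundred]

lemma one_add_log_div_le_of_log_le {x L : ℝ} (hx : 1 ≤ x) (hL : 8 ≤ L) (hLx : L ≤ √x)
    (hxL : log x ≤ L) : (1 + log x) / L ≤ 1 / 4 * log (100 * x / L) := by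
  have hLpos : 0 < L := by linarith
  have hLx' : L ≤ x := hLx.trans (sqrt_le_self_iff.2 (Or.inr hx))
  have hleft : (1 + log x) / L ≤ 9 / 8 := by
    rw [div_le_iff₀ hLpos]; linarith
  have harg : (100 : ℝ) ≤ 100 * x / L := by
    rw [le_div_iff₀ hLpos]; nlinarith
  linarith [log_le_log (by norm_num) harg, nine_div_two_le_log_hundred]

lemma one_add_log_div_min_le {x L : ℝ} (hx : 1 ≤ x) (hL : 8 ≤ L) (hxL : log x ≤ L) :
    (1 + log x) / min √x L ≤ 1 / 4 * log (100 * x / min √x L) := by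
  rcases le_total √x L with h | h
  · rw [min_eq_left h]; exact one_add_log_div_sqrt_le hx
  · rw [min_eq_right h]; exact one_add_log_div_le_of_log_le hx hL h hxL

/-- For all sufficiently large `n` and all `1 ≤ i ≤ n`,
`(1/4)·log(100n/(i·d(i))) ≥ log(e·n/i)/d(i)`. -/
theorem quarter_log_ge :
    ∃ N₀ : ℕ, ∀ n : ℕ, N₀ ≤ n → ∀ i : ℕ, 1 ≤ i → i ≤ n →
      Real.log (Real.exp 1 * (n : ℝ) / (i : ℝ)) / dFun n i ≤
        (1 / 4) * Real.log (100 * (n : ℝ) / ((i : ℝ) * dFun n i)) := by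
  refine ⟨10000, fun n hn i hi hin => ?_⟩
  have hipos : (0 : ℝ) < i := by exact_mod_cast hi
  have hin' : (i : ℝ) ≤ n := by exact_mod_cast hin
  have hx : 1 ≤ (n : ℝ) / i := (one_le_div hipos).2 hin'
  have hxL : log ((n : ℝ) / i) ≤ log n :=
    log_le_log (by linarith) (div_le_self (by linarith) (by exact_mod_cast hi))
  have hL : 8 ≤ log n := eight_le_log (by exact_mod_cast hn)
  have hlhs : log (exp 1 * n / i) = 1 + log ((n : ℝ) / i) := by
    rw [mul_div_assoc, log_mul (exp_ne_zero 1) (by linarith), log_exp]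
  have harg : 100 * (n : ℝ) / (i * dFun n i) = 100 * (n / i) / dFun n i := by
    rw [mul_div_assoc, mul_div_assoc, div_div]
  rw [hlhs, harg]
  exact one_add_log_div_min_le hx hL hxL
end

section
/- Pósa rotation. Let G be a simple graph and let v₁, v₂, …, v_s be a path in G (the vertices v₁,…,v_s are pairwise distinct and v_t is adjacent to v_{t+1} for every 1 ≤ t < s). Suppose there are indices i and j with 1 ≤ i, i+1 < j ≤ s such that v_i is adjacent to v_j and v_{i+1} is adjacent to v_s. Then the sequence v₁, …, v_i, v_j, v_{j+1}, …, v_s, v_{i+1}, v_{i+2}, …, v_{j−1} is again a path in G, and it has the same vertex set {v₁,…,v_s} as the original path. -/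
/-! The rotated sequence reads the original path in the order of a permutation `posaIndex` of the
positions `1,…,s`. Consecutive rotated positions are consecutive original positions except at the
two seams, which are bridged by the chords `v_i v_j` and `v_s v_{i+1}`; so the path property,
injectivity and the vertex set all transfer along this permutation. -/

/-- The Pósa rotation of the path `v₁,…,v_s` using the indices `i < j`:
the sequence `v₁,…,v_i, v_j, v_{j+1},…,v_s, v_{i+1}, v_{i+2},…,v_{j−1}`
(given here as a function on positions `1,…,s`). -/
def posaRotate {V : Type*} (v : ℕ → V) (s i j : ℕ) : ℕ → V := fun t =>
  if t ≤ i then v t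
  else if t ≤ i + (s - j) + 1 then v (j + (t - i) - 1)
  else v (t - (s - j) - 1)

def posaIndex (s i j t : ℕ) : ℕ :=
  if t ≤ i then t
  else if t ≤ i + (s - j) + 1 then j + (t - i) - 1
  else t - (s - j) - 1

theorem posaRotate_eq_comp {V : Type*} (v : ℕ → V) (s i j : ℕ) :
    posaRotate v s i j = v ∘ posaIndex s i j := by
  funext t
  simp only [posaRotate, posaIndex, Function.comp_apply]
  split_ifs <;> rfl

section posaIndex

variable {s i j : ℕ}

theorem posaIndex_bijOn (hij : i + 1 < j) (hjs : j ≤ s) :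
    Set.BijOn (posaIndex s i j) (Set.Icc 1 s) (Set.Icc 1 s) := by
  refine ⟨fun t ⟨ht, hts⟩ => ?_, fun t ⟨ht, hts⟩ u ⟨hu, hus⟩ h => ?_, fun u ⟨hu, hus⟩ => ?_⟩
  · unfold posaIndex
    split_ifs <;> constructor <;> omega
  · unfold posaIndex at h
    split_ifs at h <;> omega
  · by_cases hui : u ≤ i
    · exact ⟨u, ⟨hu, hus⟩, by simp [posaIndex, hui]⟩
    by_cases huj : u < j
    · exact ⟨u + (s - j) + 1, ⟨by omega, by omega⟩, by unfold posaIndex; split_ifs <;> omega⟩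
    · exact ⟨u - j + i + 1, ⟨by omega, by omega⟩, by unfold posaIndex; split_ifs <;> omega⟩

theorem posaIndex_succ (hij : i + 1 < j) (hjs : j ≤ s) {t : ℕ} (hts : t < s) :
    posaIndex s i j (t + 1) = posaIndex s i j t + 1 ∨
    (posaIndex s i j t = i ∧ posaIndex s i j (t + 1) = j) ∨
    (posaIndex s i j t = s ∧ posaIndex s i j (t + 1) = i + 1) := by
  unfold posaIndex
  split_ifs <;> omega

end posaIndex

theorem posa_rotation_general {V : Type*} (G : SimpleGraph V) (v : ℕ → V) (s i j : ℕ)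
    (hinj : ∀ t u, 1 ≤ t → t ≤ s → 1 ≤ u → u ≤ s → v t = v u → t = u)
    (hadj : ∀ t, 1 ≤ t → t < s → G.Adj (v t) (v (t + 1)))
    (hij : i + 1 < j) (hjs : j ≤ s)
    (hij_adj : G.Adj (v i) (v j)) (hi1s_adj : G.Adj (v (i + 1)) (v s)) :
    (∀ t, 1 ≤ t → t < s →
        G.Adj (posaRotate v s i j t) (posaRotate v s i j (t + 1))) ∧
    (∀ t u, 1 ≤ t → t ≤ s → 1 ≤ u → u ≤ s →
        posaRotate v s i j t = posaRotate v s i j u → t = u) ∧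
    posaRotate v s i j '' Set.Icc 1 s = v '' Set.Icc 1 s := by
  have hσ := posaIndex_bijOn hij hjs
  rw [posaRotate_eq_comp]
  refine ⟨fun t ht hts => ?_, fun t u ht hts hu hus h => ?_, by rw [Set.image_comp, hσ.image_eq]⟩
  · obtain ⟨hσt, -⟩ := hσ.mapsTo ⟨ht, hts.le⟩
    obtain ⟨-, hσt'⟩ := hσ.mapsTo (x := t + 1) ⟨by omega, hts⟩
    rcases posaIndex_succ hij hjs hts with hsucc | ⟨h₁, h₂⟩ | ⟨h₁, h₂⟩
    · simpa [hsucc] using hadj _ hσt (by omega)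
    · simpa [h₁, h₂] using hij_adj
    · simpa [h₁, h₂] using hi1s_adj.symm
  · obtain ⟨hσt, hσts⟩ := hσ.mapsTo ⟨ht, hts⟩
    obtain ⟨hσu, hσus⟩ := hσ.mapsTo ⟨hu, hus⟩
    exact hσ.injOn ⟨ht, hts⟩ ⟨hu, hus⟩ (hinj _ _ hσt hσts hσu hσus h)

/-- Pósa rotation: if `v₁,…,v_s` is a path in a simple graph `G`, `1 ≤ i`,
`i+1 < j ≤ s`, `v_i` is adjacent to `v_j` and `v_{i+1}` is adjacent to `v_s`,
then `v₁,…,v_i, v_j, v_{j+1},…,v_s, v_{i+1},…,v_{j−1}` is again a path in `G`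
with the same vertex set. -/
theorem posa_rotation {V : Type*} (G : SimpleGraph V) (v : ℕ → V) (s i j : ℕ)
    (hinj : ∀ t u, 1 ≤ t → t ≤ s → 1 ≤ u → u ≤ s → v t = v u → t = u)
    (hadj : ∀ t, 1 ≤ t → t < s → G.Adj (v t) (v (t + 1)))
    (hi : 1 ≤ i) (hij : i + 1 < j) (hjs : j ≤ s)
    (hij_adj : G.Adj (v i) (v j)) (hi1s_adj : G.Adj (v (i + 1)) (v s)) :
    (∀ t, 1 ≤ t → t < s →
        G.Adj (posaRotate v s i j t) (posaRotate v s i j (t + 1))) ∧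
    (∀ t u, 1 ≤ t → t ≤ s → 1 ≤ u → u ≤ s →
        posaRotate v s i j t = posaRotate v s i j u → t = u) ∧
    posaRotate v s i j '' Set.Icc 1 s = v '' Set.Icc 1 s :=
  posa_rotation_general G v s i j hinj hadj hij hjs hij_adj hi1s_adj
end
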